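/- arXiv:2003.06213 — 2 statements merged into one kernel-verified Lean document; each statement's English description precedes it below -/
import Mathlib

section
/- In the Maximin UCB algorithm, if the good event G_i holds — namely (a) μ_1 < UCB_1(t) for all rounds t ∈ [n], and (b) min_{j∈[p]} μ̂_{ij}^{(u_i)} + √(2σ²log(1/δ)/u_i) < μ_1 — then the number of times suboptimal channel i is selected satisfies T_i(n) ≤ u_i. -/
/-!
Channel `i` can only be selected in a round `t + 1` after the initial phase if its index is
maximal. Once it has been selected `u` times, its index is the one computed from `u` samples,
which by (b) lies below `μ₁`, while by (a) the index of channel `1` lies above `μ₁`. So channel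
`i` is never selected again, and its count stays at `u`.
-/

open Finset

section SelectionCount

variable {α : Type*} [DecidableEq α] (I : ℕ → α) (k : α)

theorem card_filter_Icc_one_succ (t : ℕ) :
    #{s ∈ Icc 1 (t + 1) | I s = k} =
      #{s ∈ Icc 1 t | I s = k} + if I (t + 1) = k then 1 else 0 := by
  rw [← insert_Icc_right_eq_Icc_add_one (by omega), filter_insert]
  split_ifs
  · rw [card_insert_of_notMem (by simp)]
  · rfl

variable {I k}

theorem card_filter_Icc_one_le_of_blocked_at {m u n : ℕ}
    (hm : #{s ∈ Icc 1 m | I s = k} ≤ u)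
    (hblocked : ∀ t, m ≤ t → t < n → #{s ∈ Icc 1 t | I s = k} = u → I (t + 1) ≠ k) :
    #{s ∈ Icc 1 n | I s = k} ≤ u := by
  rcases le_total n m with hnm | hmn
  · exact (card_le_card (filter_subset_filter _ (Icc_subset_Icc_right hnm))).trans hm
  induction n, hmn using Nat.le_induction with
  | base => exact hm
  | succ t hmt ih =>
    have ht := ih fun s hms hst ↦ hblocked s hms (by omega)
    rw [card_filter_Icc_one_succ]
    rcases ht.lt_or_eq with hlt | heq
    · split_ifs <;> omega
    · rw [if_neg (hblocked t hmt (by omega) heq)]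
      exact heq.le

end SelectionCount

theorem stmt3_general (n m p : ℕ) (σ δ : ℝ)
    (μhat : Fin m → Fin p → ℕ → ℝ)       -- empirical means from `s` samples
    (μ1 : ℝ)                              -- maximin value of the optimal channel
    (I : ℕ → Fin m)                       -- channel selected in each round
    (T : Fin m → ℕ → ℕ)                   -- selection counts
    (hT : ∀ k t, T k t = ((Finset.Icc 1 t).filter (fun s => I s = k)).card)
    (UCB : Fin m → ℕ → ℝ)
    (hUCB : ∀ k t, UCB k t = (⨅ j, μhat k j (T k (t - 1))) +
      Real.sqrt (2 * σ ^ 2 * Real.log (1 / δ) / (T k (t - 1))))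
    (one : Fin m)                         -- the maximin optimal channel
    (hsel : ∀ t, m < t → t ≤ n → ∀ k, UCB k t ≤ UCB (I t) t)
    (i : Fin m) (u : ℕ) (hu1 : 1 ≤ u)
    (hinit : T i m = 1)                   -- each channel pulled once initially
    (hG1 : ∀ t, 1 ≤ t → t ≤ n → μ1 < UCB one t)
    (hG2 : (⨅ j, μhat i j u) + Real.sqrt (2 * σ ^ 2 * Real.log (1 / δ) / u) < μ1) :
    T i n ≤ u := by
  rw [hT]
  refine card_filter_Icc_one_le_of_blocked_at (m := m) (by rw [← hT, hinit]; exact hu1) ?_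
  intro t hmt htn hcount hIt
  have hUCB_i : UCB i (t + 1) < μ1 := by
    rwa [hUCB, Nat.add_sub_cancel, hT, hcount]
  have hmax := hsel (t + 1) (by omega) htn one
  rw [hIt] at hmax
  linarith [hG1 (t + 1) (by omega) htn]

/-- In the Maximin UCB algorithm, if the good event `G_i` holds — (a) the optimal
channel's UCB index never underestimates `μ₁` in any round `t ∈ [n]`, and (b) the
UCB index of channel `i` based on `u` samples is below `μ₁` — then channel `i` is
selected at most `u` times in `n` rounds. -/
theorem stmt3 (n m p : ℕ) [NeZero p] (hm : 0 < m) (σ δ : ℝ)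
    (μhat : Fin m → Fin p → ℕ → ℝ)       -- empirical means from `s` samples
    (μ1 : ℝ)                              -- maximin value of the optimal channel
    (I : ℕ → Fin m)                       -- channel selected in each round
    (T : Fin m → ℕ → ℕ)                   -- selection counts
    (hT : ∀ k t, T k t = ((Finset.Icc 1 t).filter (fun s => I s = k)).card)
    (UCB : Fin m → ℕ → ℝ)
    (hUCB : ∀ k t, UCB k t = (⨅ j, μhat k j (T k (t - 1))) +
      Real.sqrt (2 * σ ^ 2 * Real.log (1 / δ) / (T k (t - 1))))
    (one : Fin m)                         -- the maximin optimal channel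
    (hsel : ∀ t, m < t → t ≤ n → ∀ k, UCB k t ≤ UCB (I t) t)
    (i : Fin m) (u : ℕ) (hu1 : 1 ≤ u) (hun : u ≤ n)
    (hinit : T i m = 1)                   -- each channel pulled once initially
    (hG1 : ∀ t, 1 ≤ t → t ≤ n → μ1 < UCB one t)
    (hG2 : (⨅ j, μhat i j u) + Real.sqrt (2 * σ ^ 2 * Real.log (1 / δ) / u) < μ1) :
    T i n ≤ u :=
  stmt3_general n m p σ δ μhat μ1 I T hT UCB hUCB one hsel i u hu1 hinit hG1 hG2
end

section
/- (Problem-independent regret bound) If for every channel i with gap Δ_i > 0 one has E[T_i(n)] ≤ 3 + 16σ²log(n)/Δ_i², and ∑_{i=1}^m T_i(n) = n, then the regret R_n = ∑_i Δ_i E[T_i(n)] satisfies R_n ≤ 8√(n·m·σ²·log(n)) + 3∑_{i=1}^m Δ_i. -/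
/-!
Instead of splitting the channels at a threshold gap, bound each channel separately: the excess
`Δᵢ (Tᵢ - 3)` is at most both `Δᵢ Tᵢ` and `16 σ² log n / Δᵢ`, hence at most their geometric mean
`4 σ √(log n · Tᵢ)`. Cauchy–Schwarz over the `m` channels with `∑ Tᵢ = n` then bounds the total
excess by `4 √(n m σ² log n)`, half the claimed constant.
-/

open Real Finset

lemma mul_le_add_sqrt_mul_sqrt_of_le_add_div_sq {a c Δ x : ℝ} (ha : 0 ≤ a) (hΔ : 0 ≤ Δ)
    (h : 0 < Δ → x ≤ a + c / Δ ^ 2) : Δ * x ≤ a * Δ + √c * √x := by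
  set y := Δ * x - a * Δ
  suffices y ≤ √c * √x by linarith
  rcases le_or_gt y 0 with hy | hy
  · exact hy.trans (by positivity)
  have hΔpos : 0 < Δ := hΔ.lt_of_ne (by rintro rfl; simp [y] at hy)
  have hy_le_div : y ≤ c / Δ := by
    have := mul_le_mul_of_nonneg_left (h hΔpos) hΔ
    calc y = Δ * x - a * Δ := rfl
      _ ≤ Δ * (a + c / Δ ^ 2) - a * Δ := by linarith
      _ = c / Δ := by field_simp; ring
  have hc : 0 < c := by
    have := hy.trans_le hy_le_div
    rwa [div_pos_iff_of_pos_right hΔpos] at this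
  have hy_le_mul : y ≤ Δ * x := by linarith [mul_nonneg ha hΔ]
  have hsq : y ^ 2 ≤ c * x := by
    calc y ^ 2 ≤ c / Δ * (Δ * x) := by
          rw [sq]; exact mul_le_mul hy_le_div hy_le_mul hy.le (hy.le.trans hy_le_div)
      _ = c * x := by field_simp
  rw [← sqrt_mul hc.le]
  exact le_sqrt_of_sq_le hsq

lemma sqrt_mul_sum_sqrt_le {ι : Type*} [Fintype ι] (c : ℝ) {x : ι → ℝ} (hx : ∀ i, 0 ≤ x i) :
    ∑ i, √c * √(x i) ≤ √(c * (Fintype.card ι * ∑ i, x i)) := by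
  have hcs : ∑ i, √1 * √(x i) ≤ √(∑ _i : ι, (1 : ℝ)) * √(∑ i, x i) :=
    sum_sqrt_mul_sqrt_le univ (fun _ ↦ zero_le_one) hx
  have hsum_nonneg : 0 ≤ ∑ i, x i := sum_nonneg fun i _ ↦ hx i
  simp only [sqrt_one, one_mul, sum_const, card_univ, nsmul_eq_mul, mul_one] at hcs
  rw [← mul_sum, sqrt_mul' c (by positivity), sqrt_mul (Nat.cast_nonneg _)]
  exact mul_le_mul_of_nonneg_left hcs (sqrt_nonneg c)

lemma sum_mul_le_of_le_add_div_sq {ι : Type*} [Fintype ι] {a c : ℝ} {Δ x : ι → ℝ} (ha : 0 ≤ a)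
    (hΔ : ∀ i, 0 ≤ Δ i) (hx : ∀ i, 0 ≤ x i) (h : ∀ i, 0 < Δ i → x i ≤ a + c / Δ i ^ 2) :
    ∑ i, Δ i * x i ≤ a * ∑ i, Δ i + √(c * (Fintype.card ι * ∑ i, x i)) :=
  calc ∑ i, Δ i * x i ≤ ∑ i, (a * Δ i + √c * √(x i)) :=
        sum_le_sum fun i _ ↦ mul_le_add_sqrt_mul_sqrt_of_le_add_div_sq ha (hΔ i) (h i)
    _ = a * ∑ i, Δ i + ∑ i, √c * √(x i) := by rw [sum_add_distrib, mul_sum]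
    _ ≤ a * ∑ i, Δ i + √(c * (Fintype.card ι * ∑ i, x i)) := by
        gcongr; exact sqrt_mul_sum_sqrt_le c hx

theorem stmt9_general (m n : ℕ) (σ : ℝ)
    (Δ : Fin m → ℝ) (hΔ : ∀ i, 0 ≤ Δ i)
    (ET : Fin m → ℝ) (hET0 : ∀ i, 0 ≤ ET i)
    (hsum : ∑ i, ET i = (n : ℝ))
    (hETb : ∀ i, 0 < Δ i → ET i ≤ 3 + 16 * σ ^ 2 * Real.log n / (Δ i) ^ 2) :
    ∑ i, Δ i * ET i ≤ 8 * Real.sqrt ((n : ℝ) * m * σ ^ 2 * Real.log n) + 3 * ∑ i, Δ i := by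
  have hregret := sum_mul_le_of_le_add_div_sq (by norm_num) hΔ hET0 hETb
  have hX : 0 ≤ (n : ℝ) * m * σ ^ 2 * Real.log n := by
    have := log_natCast_nonneg n
    positivity
  have hsqrt : √(16 * σ ^ 2 * Real.log n * (m * n)) = 4 * √((n : ℝ) * m * σ ^ 2 * Real.log n) := by
    rw [show 16 * σ ^ 2 * Real.log n * (m * n) = 4 ^ 2 * ((n : ℝ) * m * σ ^ 2 * Real.log n) by ring,
      sqrt_mul (by norm_num), sqrt_sq (by norm_num)]
  rw [Fintype.card_fin, hsum, hsqrt] at hregret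
  linarith [sqrt_nonneg ((n : ℝ) * m * σ ^ 2 * Real.log n)]

/-- Theorem 2 (problem-independent regret bound): if each suboptimal channel
satisfies `E[Tᵢ(n)] ≤ 3 + 16σ² log(n)/Δᵢ²` and the expected counts sum to `n`,
then `R_n = ∑ᵢ Δᵢ E[Tᵢ(n)] ≤ 8√(n m σ² log n) + 3 ∑ᵢ Δᵢ`. -/
theorem stmt9 (m n : ℕ) (hm : 0 < m) (hn : 1 ≤ n) (σ : ℝ) (hσ : 0 < σ)
    (Δ : Fin m → ℝ) (hΔ : ∀ i, 0 ≤ Δ i)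
    (ET : Fin m → ℝ) (hET0 : ∀ i, 0 ≤ ET i)
    (hsum : ∑ i, ET i = (n : ℝ))
    (hETb : ∀ i, 0 < Δ i → ET i ≤ 3 + 16 * σ ^ 2 * Real.log n / (Δ i) ^ 2) :
    ∑ i, Δ i * ET i ≤ 8 * Real.sqrt ((n : ℝ) * m * σ ^ 2 * Real.log n) + 3 * ∑ i, Δ i :=
  stmt9_general m n σ Δ hΔ ET hET0 hsum hETb
end
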